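/- arXiv:2003.00570 — 5 statements merged into one kernel-verified Lean document; each statement's English description precedes it below -/
import Mathlib

section
/- Let W ~ Hyp(p,s,s). If s = O(√p) (specifically, if there is a constant bound on s²/p suitably controlling the ratio), then there exists a universal constant C > 0 such that P[W = k] ≤ C·(s²/p)^k / k! for all 0 ≤ k ≤ s. -/
open Finset

/-- `P[W = k]` where `W = |S ∩ S'|` for `S, S'` independent uniformly random
size-`s` subsets of a `p`-element set (hypergeometric `Hyp(p,s,s)`). -/
noncomputable def hypProb (p s k : ℕ) : ℝ :=
  ((((Finset.powersetCard s (Finset.univ : Finset (Fin p))) ×ˢ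
      (Finset.powersetCard s (Finset.univ : Finset (Fin p)))).filter
        (fun SS => (SS.1 ∩ SS.2).card = k)).card : ℝ) / ((p.choose s : ℝ)) ^ 2

/-!
Fixing the first set `S`, a second set `S'` with `|S ∩ S'| = k` is determined by `S ∩ S'` and
`S' \ S`, so `P[W = k] ≤ C(s,k) C(p-s,s-k) / C(p,s)`. The identity
`C(p,s) C(s,k) = C(p,k) C(p-k,s-k) ≥ C(p,k) C(p-s,s-k)` turns this into the first-moment bound
`P[W = k] ≤ C(s,k)² / C(p,k)`. Finally `C(s,k) / C(p,k) = ∏_{i<k} (s-i)/(p-i) ≤ (s/p)^k` and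
`C(s,k) ≤ s^k / k!`, so `P[W = k] ≤ (s²/p)^k / k!`: the constant `C = 1` works.
-/

namespace Nat

theorem descFactorial_mul_pow_le {a n : ℕ} (h : a ≤ n) (k : ℕ) :
    a.descFactorial k * n ^ k ≤ n.descFactorial k * a ^ k := by
  induction k with
  | zero => simp
  | succ k ih =>
    have hstep : (a - k) * n ≤ (n - k) * a := by
      rcases le_or_gt k a with hk | hk
      · zify [hk, hk.trans h]; nlinarith
      · simp [Nat.sub_eq_zero_of_le hk.le]
    rw [descFactorial_succ, descFactorial_succ, pow_succ, pow_succ]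
    calc (a - k) * a.descFactorial k * (n ^ k * n)
        = ((a - k) * n) * (a.descFactorial k * n ^ k) := by ring
      _ ≤ ((n - k) * a) * (n.descFactorial k * a ^ k) := Nat.mul_le_mul hstep ih
      _ = (n - k) * n.descFactorial k * (a ^ k * a) := by ring

theorem choose_mul_pow_le {a n : ℕ} (h : a ≤ n) (k : ℕ) :
    a.choose k * n ^ k ≤ n.choose k * a ^ k := by
  have := descFactorial_mul_pow_le h k
  rw [descFactorial_eq_factorial_mul_choose, descFactorial_eq_factorial_mul_choose,
    mul_assoc, mul_assoc] at this
  exact Nat.le_of_mul_le_mul_left this (factorial_pos k)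

theorem choose_sub_mul_choose_le {n a b k : ℕ} (hka : k ≤ a) (hkb : k ≤ b) :
    (n - a).choose (b - k) * n.choose k ≤ n.choose b * b.choose k := by
  rw [choose_mul hkb, mul_comm]
  exact Nat.mul_le_mul_left _ (choose_le_choose _ (by omega))

theorem cast_choose_div_cast_choose_le {a n : ℕ} (h : a ≤ n) (k : ℕ) :
    (a.choose k : ℝ) / n.choose k ≤ ((a : ℝ) / n) ^ k := by
  obtain rfl | hn0 := n.eq_zero_or_pos
  · obtain rfl := Nat.le_zero.1 h
    cases k <;> simp
  rcases (n.choose k).eq_zero_or_pos with hn | hn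
  · rw [hn, Nat.cast_zero, div_zero]; positivity
  rw [div_pow, div_le_div_iff₀ (by exact_mod_cast hn) (by positivity),
    mul_comm _ (n.choose k : ℝ)]
  exact_mod_cast choose_mul_pow_le h k

end Nat

theorem card_filter_card_inter_eq_le {α : Type*} [Fintype α] [DecidableEq α]
    (S : Finset α) (m k : ℕ) :
    #{T ∈ powersetCard m univ | #(S ∩ T) = k}
      ≤ (#S).choose k * (Fintype.card α - #S).choose (m - k) := by
  calc #{T ∈ powersetCard m univ | #(S ∩ T) = k}
      ≤ #(powersetCard k S ×ˢ powersetCard (m - k) Sᶜ) := by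
        refine card_le_card_of_injOn (fun T => (S ∩ T, T \ S)) ?_ ?_
        · intro T hT
          simp only [coe_filter, mem_powersetCard, subset_univ, true_and,
            Set.mem_ofPred_eq] at hT
          have := card_sdiff_add_card_inter T S
          simp only [coe_product, Set.mem_prod, mem_coe, mem_powersetCard]
          refine ⟨⟨inter_subset_left, hT.2⟩, fun x hx => ?_, ?_⟩
          · simp [(mem_sdiff.1 hx).2]
          · rw [inter_comm] at this; omega
        · intro T _ T' _ h
          simp only [Prod.mk.injEq] at h
          rw [← sdiff_union_inter T S, ← sdiff_union_inter T' S, inter_comm T,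
            inter_comm T', h.1, h.2]
    _ = (#S).choose k * (Fintype.card α - #S).choose (m - k) := by
        rw [card_product, card_powersetCard, card_powersetCard, card_compl]

theorem card_filter_pair_card_inter_eq_le {α : Type*} [Fintype α] [DecidableEq α]
    (a b k : ℕ) :
    #{ST ∈ powersetCard a (univ : Finset α) ×ˢ powersetCard b univ | #(ST.1 ∩ ST.2) = k}
      ≤ (Fintype.card α).choose a * (a.choose k * (Fintype.card α - a).choose (b - k)) := by
  calc _ ≤ a.choose k * (Fintype.card α - a).choose (b - k)
          * #(powersetCard a (univ : Finset α)) := by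
        refine card_le_mul_card_image_of_maps_to (f := Prod.fst)
          (fun ST hST => (mem_product.1 (mem_filter.1 hST).1).1) _ fun S hS => ?_
        rw [← (mem_powersetCard.1 hS).2]
        refine (card_le_card_of_injOn Prod.snd ?_ ?_).trans (card_filter_card_inter_eq_le S b k)
        · intro ST hST
          simp only [coe_filter, mem_filter, mem_product] at hST
          obtain ⟨⟨⟨_, hT⟩, hk⟩, rfl⟩ := hST
          simpa using ⟨(mem_powersetCard.1 hT).2, hk⟩
        · intro ST hST ST' hST' h
          simp only [coe_filter, mem_filter] at hST hST'
          exact Prod.ext (hST.2.trans hST'.2.symm) h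
    _ = (Fintype.card α).choose a * (a.choose k * (Fintype.card α - a).choose (b - k)) := by
        rw [card_powersetCard, card_univ, mul_comm]

theorem choose_sq_div_choose_le_pow_div_factorial {a n : ℕ} (h : a ≤ n) (k : ℕ) :
    (a.choose k : ℝ) ^ 2 / n.choose k ≤ ((a : ℝ) ^ 2 / n) ^ k / k.factorial :=
  calc (a.choose k : ℝ) ^ 2 / n.choose k = a.choose k * (a.choose k / n.choose k) := by ring
    _ ≤ (a ^ k / k.factorial) * (a / n) ^ k :=
        mul_le_mul (Nat.choose_le_pow_div k a) (Nat.cast_choose_div_cast_choose_le h k)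
          (by positivity) (by positivity)
    _ = ((a : ℝ) ^ 2 / n) ^ k / k.factorial := by ring

theorem hypProb_le_choose_sq_div_choose {p s k : ℕ} (hks : k ≤ s) (hsp : s ≤ p) :
    hypProb p s k ≤ (s.choose k : ℝ) ^ 2 / p.choose k := by
  have hps : (0 : ℝ) < p.choose s := by exact_mod_cast Nat.choose_pos hsp
  have hpk : (0 : ℝ) < p.choose k := by exact_mod_cast Nat.choose_pos (hks.trans hsp)
  have hcount := card_filter_pair_card_inter_eq_le (α := Fin p) s s k
  rw [Fintype.card_fin] at hcount
  calc hypProb p s k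
      ≤ p.choose s * (s.choose k * (p - s).choose (s - k)) / (p.choose s : ℝ) ^ 2 := by
        unfold hypProb
        gcongr
        exact_mod_cast hcount
    _ = s.choose k * (p - s).choose (s - k) / p.choose s := by field_simp
    _ ≤ (s.choose k : ℝ) ^ 2 / p.choose k := by
        rw [div_le_div_iff₀ hps hpk]
        have key : s.choose k * ((p - s).choose (s - k) * p.choose k)
            ≤ s.choose k * (p.choose s * s.choose k) :=
          Nat.mul_le_mul_left _ (Nat.choose_sub_mul_choose_le hks hks)
        calc (s.choose k * (p - s).choose (s - k) : ℝ) * p.choose k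
            = s.choose k * ((p - s).choose (s - k) * p.choose k) := by ring
          _ ≤ s.choose k * (p.choose s * s.choose k) := by exact_mod_cast key
          _ = (s.choose k : ℝ) ^ 2 * p.choose s := by ring

theorem hypProb_le_poisson_type_bound_general (c : ℝ) :
    ∃ C : ℝ, 0 < C ∧ ∀ p s k : ℕ, s ≤ p → (s : ℝ) ^ 2 ≤ c * p → k ≤ s →
      hypProb p s k ≤ C * ((s : ℝ) ^ 2 / (p : ℝ)) ^ k / (Nat.factorial k : ℝ) :=
  ⟨1, one_pos, fun p s k hsp _ hks => by
    simpa using (hypProb_le_choose_sq_div_choose hks hsp).trans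
      (choose_sq_div_choose_le_pow_div_factorial hsp k)⟩

/-- If `s = O(√p)` (i.e. `s² ≤ c·p`), then there is a constant `C > 0`
(depending only on `c`) such that `P[W = k] ≤ C (s²/p)^k / k!` for all `k ≤ s`. -/
theorem hypProb_le_poisson_type_bound (c : ℝ) (hc : 0 < c) :
    ∃ C : ℝ, 0 < C ∧ ∀ p s k : ℕ, s ≤ p → (s : ℝ) ^ 2 ≤ c * p → k ≤ s →
      hypProb p s k ≤ C * ((s : ℝ) ^ 2 / (p : ℝ)) ^ k / (Nat.factorial k : ℝ) :=
  hypProb_le_poisson_type_bound_general c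
end

section
/- Let Z₁,…,Z_s be independent with Z_i ~ N(μ_i, 1) and |μ_i| > √(2r log p) for all i. Then for 0 < τ < r and p sufficiently large, P[∑_{i=1}^s |Z_i| ≤ s·√(2τ log p)] ≤ 2^s · exp(−(√r − √τ)²·s·log p). -/
open MeasureTheory ProbabilityTheory Real
open scoped ENNReal NNReal

/-!
Choosing the sign `σ` of `μᵢ`, one has `-λ|x| ≤ -λσx`, so `E exp(-λ|Zᵢ|)` is at most the Gaussian
moment generating function `exp(λ²/2 - λ|μᵢ|)`. The Chernoff bound for the product measure with
`λ = (√r - √τ)√(2 log p)` then gives the estimate already without the factor `2^s`.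
-/

section ProductChernoff

variable {ι : Type*} [Fintype ι] {Ω : ι → Type*} [∀ i, MeasurableSpace (Ω i)]
  (ν : (i : ι) → Measure (Ω i)) [∀ i, IsProbabilityMeasure (ν i)]

theorem lintegral_pi_prod_eq_prod_lintegral {f : (i : ι) → Ω i → ℝ≥0∞}
    (hf : ∀ i, Measurable (f i)) :
    ∫⁻ z, ∏ i, f i (z i) ∂Measure.pi ν = ∏ i, ∫⁻ x, f i x ∂ν i := by
  rw [lintegral_prod_eq_prod_lintegral_of_indepFun _ _
    (iIndepFun_pi fun i => (hf i).aemeasurable) fun i => (hf i).comp (measurable_pi_apply i)]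
  exact Finset.prod_congr rfl fun i _ => (measurePreserving_eval ν i).lintegral_comp (hf i)

theorem measure_pi_sum_le_le_exp_mul_prod_lintegral {g : (i : ι) → Ω i → ℝ}
    (hg : ∀ i, Measurable (g i)) {t : ℝ} (ht : 0 ≤ t) (c : ℝ) :
    Measure.pi ν {z | ∑ i, g i (z i) ≤ c} ≤
      ENNReal.ofReal (exp (t * c)) * ∏ i, ∫⁻ x, ENNReal.ofReal (exp (-(t * g i x))) ∂ν i := by
  have hprod : Measurable fun z : (i : ι) → Ω i => ∏ i, ENNReal.ofReal (exp (-(t * g i (z i)))) :=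
    Finset.measurable_prod _ fun i _ =>
      (((hg i).comp (measurable_pi_apply i)).const_mul t).neg.exp.ennreal_ofReal
  rw [← lintegral_pi_prod_eq_prod_lintegral ν fun i => by fun_prop,
    ← lintegral_const_mul' _ _ ENNReal.ofReal_ne_top]
  refine le_trans (measure_mono fun z (hz : ∑ i, g i (z i) ≤ c) => ?_)
    (one_mul (Measure.pi ν _) ▸ mul_meas_ge_le_lintegral₀ (hprod.const_mul _).aemeasurable 1)
  rw [Set.mem_ofPred_eq, ← ENNReal.ofReal_prod_of_nonneg fun i _ => (exp_pos _).le,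
    ← ENNReal.ofReal_mul (exp_pos _).le, ← exp_sum, ← exp_add, Finset.sum_neg_distrib,
    ← Finset.mul_sum]
  exact ENNReal.one_le_ofReal.2 (one_le_exp (by nlinarith))

end ProductChernoff

theorem lintegral_exp_mul_gaussianReal (m : ℝ) (v : ℝ≥0) (t : ℝ) :
    ∫⁻ x, ENNReal.ofReal (exp (t * x)) ∂gaussianReal m v =
      ENNReal.ofReal (exp (m * t + v * t ^ 2 / 2)) := by
  rw [← ofReal_integral_eq_lintegral_ofReal (integrable_exp_mul_gaussianReal t)
    (ae_of_all _ fun x => (exp_pos _).le)]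
  exact congrArg ENNReal.ofReal (congrFun mgf_fun_id_gaussianReal t)

theorem lintegral_exp_neg_mul_abs_gaussianReal_le (m : ℝ) (v : ℝ≥0) {t : ℝ} (ht : 0 ≤ t) :
    ∫⁻ x, ENNReal.ofReal (exp (-(t * |x|))) ∂gaussianReal m v ≤
      ENNReal.ofReal (exp (v * t ^ 2 / 2 - t * |m|)) := by
  have of_slope : ∀ a : ℝ, (∀ x, -(t * |x|) ≤ a * x) → a ^ 2 = t ^ 2 → m * a = -(t * |m|) →
      ∫⁻ x, ENNReal.ofReal (exp (-(t * |x|))) ∂gaussianReal m v ≤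
        ENNReal.ofReal (exp (v * t ^ 2 / 2 - t * |m|)) := by
    intro a hx ha hm
    calc _ ≤ ∫⁻ x, ENNReal.ofReal (exp (a * x)) ∂gaussianReal m v :=
          lintegral_mono fun x => ENNReal.ofReal_le_ofReal (exp_le_exp.2 (hx x))
      _ = _ := by rw [lintegral_exp_mul_gaussianReal, hm, ha, neg_add_eq_sub]
  rcases le_total 0 m with hm | hm
  · exact of_slope (-t) (fun x => by nlinarith [le_abs_self x]) (neg_sq t)
      (by rw [abs_of_nonneg hm]; ring)
  · exact of_slope t (fun x => by nlinarith [neg_abs_le x]) rfl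
      (by rw [abs_of_nonpos hm]; ring)

theorem folded_normal_sum_lower_tail_general (r τ : ℝ) (hτr : τ < r) :
    ∃ p₀ : ℝ, ∀ p : ℝ, p₀ ≤ p → ∀ s : ℕ, ∀ μ : Fin s → ℝ,
      (∀ i, Real.sqrt (2 * r * Real.log p) < |μ i|) →
      (Measure.pi fun i : Fin s => gaussianReal (μ i) 1)
          {z | ∑ i, |z i| ≤ (s : ℝ) * Real.sqrt (2 * τ * Real.log p)} ≤
        ENNReal.ofReal ((2 : ℝ) ^ s *
          Real.exp (-((Real.sqrt r - Real.sqrt τ) ^ 2 * s * Real.log p))) := by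
  refine ⟨1, fun p hp s μ hμ => ?_⟩
  have hlog : 0 ≤ 2 * log p := by linarith [log_nonneg hp]
  set u := √(2 * log p)
  have hu : u ^ 2 = 2 * log p := sq_sqrt hlog
  have hsqrt : ∀ x, √(2 * x * log p) = √x * u := fun x => by
    rw [mul_right_comm, mul_comm, sqrt_mul' _ hlog]
  set t := (√r - √τ) * u
  have ht : 0 ≤ t := mul_nonneg (sub_nonneg.2 (sqrt_le_sqrt hτr.le)) (sqrt_nonneg _)
  rw [hsqrt τ]
  calc _ ≤ ENNReal.ofReal (exp (t * (s * (√τ * u)))) *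
          ∏ i, ∫⁻ x, ENNReal.ofReal (exp (-(t * |x|))) ∂gaussianReal (μ i) 1 :=
        measure_pi_sum_le_le_exp_mul_prod_lintegral _ (fun _ => measurable_abs) ht _
    _ ≤ ENNReal.ofReal (exp (t * (s * (√τ * u)))) *
          ∏ _i : Fin s, ENNReal.ofReal (exp (t ^ 2 / 2 - t * (√r * u))) := by
        gcongr with i
        have hμi : √r * u ≤ |μ i| := (hsqrt r ▸ hμ i).le
        refine (lintegral_exp_neg_mul_abs_gaussianReal_le _ _ ht).trans ?_
        rw [NNReal.coe_one, one_mul]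
        gcongr
    _ = ENNReal.ofReal (exp (-((√r - √τ) ^ 2 * s * log p))) := by
        rw [Finset.prod_const, Finset.card_univ, Fintype.card_fin,
          ← ENNReal.ofReal_pow (exp_pos _).le, ← ENNReal.ofReal_mul (exp_pos _).le,
          ← exp_nat_mul, ← exp_add]
        congr 2
        -- the exponent is `-s t² / 2`, since `√τ u - √r u = -t`
        linear_combination -(s : ℝ) * (√r - √τ) ^ 2 / 2 * hu
    _ ≤ _ := ENNReal.ofReal_le_ofReal
        (le_mul_of_one_le_left (exp_pos _).le (one_le_pow₀ one_le_two))

/-- For independent `Zᵢ ~ N(μᵢ,1)` with `|μᵢ| > √(2r log p)`, `0 < τ < r`, and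
`p` sufficiently large, `P[∑|Zᵢ| ≤ s√(2τ log p)] ≤ 2^s exp(−(√r−√τ)² s log p)`. -/
theorem folded_normal_sum_lower_tail (r τ : ℝ) (hτ : 0 < τ) (hτr : τ < r) :
    ∃ p₀ : ℝ, ∀ p : ℝ, p₀ ≤ p → ∀ s : ℕ, ∀ μ : Fin s → ℝ,
      (∀ i, Real.sqrt (2 * r * Real.log p) < |μ i|) →
      (Measure.pi fun i : Fin s => gaussianReal (μ i) 1)
          {z | ∑ i, |z i| ≤ (s : ℝ) * Real.sqrt (2 * τ * Real.log p)} ≤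
        ENNReal.ofReal ((2 : ℝ) ^ s *
          Real.exp (-((Real.sqrt r - Real.sqrt τ) ^ 2 * s * Real.log p))) :=
  folded_normal_sum_lower_tail_general r τ hτr
end

section
/- Let X ~ χ²_k(ν) be a noncentral chi-square random variable with k degrees of freedom and noncentrality ν ≥ 0. Then for all x > 0, P[X > (k+ν) + 2√((k+2ν)x) + 2x] ≤ exp(−x) and P[X < (k+ν) − 2√((k+2ν)x)] ≤ exp(−x). -/
/-!
Chernoff's method. For `t < 1/2` the moment generating function of `(Z + a)²` is
`exp (t a² / (1 - 2t)) / √(1 - 2t)`, so `X` has an explicit mgf. The elementary bounds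
`-½ log (1 - 2t) ≤ t + t² / (1 - 2t)` for `0 ≤ t < 1/2` and `-½ log (1 - 2t) ≤ t + t²` for `t ≤ 0`
show that `X - (k + ν)` is sub-gamma on the right and sub-Gaussian on the left, with variance
factor `2 (k + 2ν)` and scale `2`. The two tail bounds then follow by the choices
`t = √x / (√(k + 2ν) + 2√x)` and `t = -√x / √(k + 2ν)` in the Chernoff bound.
-/

open MeasureTheory ProbabilityTheory Real
open scoped ENNReal NNReal

theorem lintegral_pi_prod_eq_prod {ι : Type*} [Fintype ι] {X : ι → Type*}
    [∀ i, MeasurableSpace (X i)] (μ : ∀ i, Measure (X i)) [∀ i, IsProbabilityMeasure (μ i)]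
    {f : ∀ i, X i → ℝ≥0∞} (hf : ∀ i, Measurable (f i)) :
    ∫⁻ x, ∏ i, f i (x i) ∂Measure.pi μ = ∏ i, ∫⁻ y, f i y ∂μ i := by
  rw [lintegral_prod_eq_prod_lintegral_of_indepFun _ _
    (iIndepFun_pi fun i ↦ (hf i).aemeasurable) fun i ↦ (hf i).comp (measurable_pi_apply i)]
  exact Finset.prod_congr rfl fun i _ ↦ (measurePreserving_eval μ i).lintegral_comp (hf i)

theorem measure_gt_le_exp_mul_lintegral_exp {α : Type*} [MeasurableSpace α] {μ : Measure α}
    {X : α → ℝ} (hX : AEMeasurable X μ) (c : ℝ) {t : ℝ} (ht : 0 ≤ t) :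
    μ {z | c < X z} ≤
      ENNReal.ofReal (exp (-(t * c))) * ∫⁻ z, ENNReal.ofReal (exp (t * X z)) ∂μ := by
  have hmarkov := mul_meas_ge_le_lintegral₀ (μ := μ)
    (f := fun z ↦ ENNReal.ofReal (exp (t * X z))) (by fun_prop) (ENNReal.ofReal (exp (t * c)))
  have hsub : {z | c < X z} ⊆
      {z | ENNReal.ofReal (exp (t * c)) ≤ ENNReal.ofReal (exp (t * X z))} :=
    fun z hz ↦ ENNReal.ofReal_le_ofReal (exp_le_exp.2 (mul_le_mul_of_nonneg_left hz.le ht))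
  calc μ {z | c < X z}
      = ENNReal.ofReal (exp (-(t * c))) * (ENNReal.ofReal (exp (t * c)) * μ {z | c < X z}) := by
        rw [← mul_assoc, ← ENNReal.ofReal_mul (exp_pos _).le, ← exp_add, neg_add_cancel,
          exp_zero, ENNReal.ofReal_one, one_mul]
    _ ≤ _ := by gcongr; exact (mul_le_mul_right (measure_mono hsub) _).trans hmarkov

section Tails

variable {α : Type*} [MeasurableSpace α] {μ : Measure α} {X : α → ℝ} {m D x : ℝ}

theorem measure_gt_le_exp_neg_of_lintegral_exp_le (hX : AEMeasurable X μ) (hD : 0 < D)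
    (hx : 0 ≤ x) (hmgf : ∀ t, 0 ≤ t → t < 1 / 2 → ∫⁻ z, ENNReal.ofReal (exp (t * X z)) ∂μ ≤
      ENNReal.ofReal (exp (t * m + D * t ^ 2 / (1 - 2 * t)))) :
    μ {z | m + 2 * √(D * x) + 2 * x < X z} ≤ ENNReal.ofReal (exp (-x)) := by
  obtain ⟨p, hp, rfl⟩ : ∃ p, 0 ≤ p ∧ x = p ^ 2 := ⟨√x, sqrt_nonneg x, (sq_sqrt hx).symm⟩
  obtain ⟨q, hq, rfl⟩ : ∃ q, 0 < q ∧ D = q ^ 2 := ⟨√D, sqrt_pos.2 hD, (sq_sqrt hD.le).symm⟩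
  have hqp : 0 < q + 2 * p := by positivity
  have ht0 : 0 ≤ p / (q + 2 * p) := by positivity
  have ht : p / (q + 2 * p) < 1 / 2 := by rw [div_lt_iff₀ hqp]; linarith
  have h12 : 1 - 2 * (p / (q + 2 * p)) = q / (q + 2 * p) := by field_simp; ring
  have hexponent : -(p / (q + 2 * p) * (m + 2 * √(q ^ 2 * p ^ 2) + 2 * p ^ 2)) +
      (p / (q + 2 * p) * m + q ^ 2 * (p / (q + 2 * p)) ^ 2 / (1 - 2 * (p / (q + 2 * p)))) =
      -p ^ 2 := by
    rw [← mul_pow, sqrt_sq (by positivity), h12]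
    field_simp
    ring
  calc _ ≤ _ := measure_gt_le_exp_mul_lintegral_exp hX _ ht0
    _ ≤ _ := mul_le_mul_right (hmgf _ ht0 ht) _
    _ = _ := by rw [← ENNReal.ofReal_mul (exp_pos _).le, ← exp_add, hexponent]

theorem measure_lt_le_exp_neg_of_lintegral_exp_le (hX : AEMeasurable X μ) (hD : 0 < D)
    (hx : 0 ≤ x) (hmgf : ∀ t ≤ 0, ∫⁻ z, ENNReal.ofReal (exp (t * X z)) ∂μ ≤
      ENNReal.ofReal (exp (t * m + D * t ^ 2))) :
    μ {z | X z < m - 2 * √(D * x)} ≤ ENNReal.ofReal (exp (-x)) := by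
  obtain ⟨p, hp, rfl⟩ : ∃ p, 0 ≤ p ∧ x = p ^ 2 := ⟨√x, sqrt_nonneg x, (sq_sqrt hx).symm⟩
  obtain ⟨q, hq, rfl⟩ : ∃ q, 0 < q ∧ D = q ^ 2 := ⟨√D, sqrt_pos.2 hD, (sq_sqrt hD.le).symm⟩
  have ht0 : 0 ≤ p / q := by positivity
  have hexponent : -(p / q * -(m - 2 * √(q ^ 2 * p ^ 2))) +
      (p / q * -m + q ^ 2 * (-(p / q)) ^ 2) = -p ^ 2 := by
    rw [← mul_pow, sqrt_sq (by positivity)]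
    field_simp
    ring
  have hmgf_neg := hmgf (-(p / q)) (neg_nonpos.2 ht0)
  simp only [neg_mul, ← mul_neg] at hmgf_neg
  calc μ {z | X z < m - 2 * √(q ^ 2 * p ^ 2)}
      = μ {z | -(m - 2 * √(q ^ 2 * p ^ 2)) < -X z} := by simp only [neg_lt_neg_iff]
    _ ≤ _ := measure_gt_le_exp_mul_lintegral_exp hX.neg _ ht0
    _ ≤ _ := mul_le_mul_right hmgf_neg _
    _ = _ := by rw [← ENNReal.ofReal_mul (exp_pos _).le, ← exp_add, hexponent]

end Tails

/-- Tilting `N(0, 1)` by `exp (t (z + a)²)` gives, up to normalisation,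
`N(2ta / (1 - 2t), 1 / (1 - 2t))`. -/
lemma gaussianPDFReal_mul_exp_mul_sq_add (a z : ℝ) {t : ℝ} (ht : t < 1 / 2) {v : ℝ≥0}
    (hv : (v : ℝ) = (1 - 2 * t)⁻¹) :
    gaussianPDFReal 0 1 z * exp (t * (z + a) ^ 2) =
      exp (t * a ^ 2 / (1 - 2 * t)) / √(1 - 2 * t) *
        gaussianPDFReal (2 * t * a / (1 - 2 * t)) v z := by
  have h : 0 < 1 - 2 * t := by linarith
  have hexp : exp (-z ^ 2 / 2) * exp (t * (z + a) ^ 2) = exp (t * a ^ 2 / (1 - 2 * t)) *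
      exp (-(z - 2 * t * a / (1 - 2 * t)) ^ 2 / (2 * (1 - 2 * t)⁻¹)) := by
    rw [← exp_add, ← exp_add]; congr 1; field_simp; ring
  simp only [gaussianPDFReal, hv, NNReal.coe_one, mul_one, sub_zero]
  rw [show 2 * π * (1 - 2 * t)⁻¹ = 2 * π / (1 - 2 * t) by ring, sqrt_div' _ h.le, inv_div,
    mul_assoc, hexp]
  have hs : √(1 - 2 * t) ≠ 0 := by positivity
  field_simp

lemma lintegral_exp_mul_sq_add_gaussianReal (a : ℝ) {t : ℝ} (ht : t < 1 / 2) :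
    ∫⁻ z, ENNReal.ofReal (exp (t * (z + a) ^ 2)) ∂gaussianReal 0 1 =
      ENNReal.ofReal (exp (t * a ^ 2 / (1 - 2 * t)) / √(1 - 2 * t)) := by
  have h : 0 < (1 - 2 * t)⁻¹ := inv_pos.2 (by linarith)
  obtain ⟨v, hv⟩ : ∃ v : ℝ≥0, (v : ℝ) = (1 - 2 * t)⁻¹ := ⟨_, Real.coe_toNNReal _ h.le⟩
  have hv0 : v ≠ 0 := by rw [ne_eq, ← NNReal.coe_eq_zero, hv]; exact h.ne'
  rw [gaussianReal_of_var_ne_zero 0 one_ne_zero,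
    lintegral_withDensity_eq_lintegral_mul _ (measurable_gaussianPDF 0 1) (by fun_prop)]
  calc ∫⁻ z, (gaussianPDF 0 1 * fun z ↦ ENNReal.ofReal (exp (t * (z + a) ^ 2))) z
      = ∫⁻ z, ENNReal.ofReal (exp (t * a ^ 2 / (1 - 2 * t)) / √(1 - 2 * t)) *
          gaussianPDF (2 * t * a / (1 - 2 * t)) v z := by
        refine lintegral_congr fun z ↦ ?_
        rw [Pi.mul_apply, gaussianPDF, gaussianPDF,
          ← ENNReal.ofReal_mul (gaussianPDFReal_nonneg _ _ _), ← ENNReal.ofReal_mul (by positivity),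
          gaussianPDFReal_mul_exp_mul_sq_add a z ht hv]
    _ = _ := by
        rw [lintegral_const_mul _ (measurable_gaussianPDF _ _), lintegral_gaussianPDF_eq_one _ hv0,
          mul_one]

lemma inv_one_sub_two_mul_le_exp_of_nonneg {t : ℝ} (ht0 : 0 ≤ t) (ht : t < 1 / 2) :
    (1 - 2 * t)⁻¹ ≤ exp (2 * (t + t ^ 2 / (1 - 2 * t))) := by
  have h : 0 < 1 - 2 * t := by linarith
  set Z := 2 * (t + t ^ 2 / (1 - 2 * t))
  have hquad : (1 - 2 * t)⁻¹ ≤ 1 + Z + Z ^ 2 / 2 := by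
    rw [inv_le_iff_one_le_mul₀' h]
    have : (1 - 2 * t) * (1 + Z + Z ^ 2 / 2) = 1 + 2 * t ^ 4 / (1 - 2 * t) := by
      simp only [Z]; field_simp; ring
    rw [this]; linarith [show 0 ≤ 2 * t ^ 4 / (1 - 2 * t) by positivity]
  exact hquad.trans (quadratic_le_exp_of_nonneg (by positivity))

lemma inv_one_sub_two_mul_le_exp_of_nonpos {t : ℝ} (ht : t ≤ 0) :
    (1 - 2 * t)⁻¹ ≤ exp (2 * (t + t ^ 2)) := by
  have h : 0 < 1 - 2 * t := by linarith
  have hlog : 2 * (-2 * t) / (-2 * t + 2) ≤ log (1 - 2 * t) := by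
    simpa [← sub_eq_add_neg] using le_log_one_add_of_nonneg (x := -2 * t) (by linarith)
  have hquad : -(2 * (t + t ^ 2)) ≤ 2 * (-2 * t) / (-2 * t + 2) := by
    rw [le_div_iff₀ (by linarith)]; nlinarith [sq_nonneg t]
  rw [inv_le_comm₀ h (exp_pos _), ← exp_neg, ← le_log_iff_exp_le h]
  exact hquad.trans hlog

section NoncentralChiSquare

variable {ι : Type*} [Fintype ι]

theorem lintegral_exp_mul_sum_sq_add (a : ι → ℝ) {t : ℝ} (ht : t < 1 / 2) :
    ∫⁻ z, ENNReal.ofReal (exp (t * ∑ i, (z i + a i) ^ 2))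
        ∂(Measure.pi fun _ ↦ gaussianReal 0 1) =
      ∏ i, ENNReal.ofReal (exp (t * a i ^ 2 / (1 - 2 * t)) / √(1 - 2 * t)) := by
  simp_rw [Finset.mul_sum, exp_sum, ENNReal.ofReal_prod_of_nonneg fun _ _ ↦ (exp_pos _).le,
    ← lintegral_exp_mul_sq_add_gaussianReal _ ht]
  exact lintegral_pi_prod_eq_prod _ (f := fun i z ↦ ENNReal.ofReal (exp (t * (z + a i) ^ 2)))
    fun i ↦ by fun_prop

theorem lintegral_exp_mul_sum_sq_add_le (a : ι → ℝ) {t g : ℝ} (ht : t < 1 / 2)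
    (hinv : (1 - 2 * t)⁻¹ ≤ exp (2 * (t + g)))
    (hshift : ∀ b : ℝ, t * b ^ 2 / (1 - 2 * t) ≤ t * b ^ 2 + 2 * b ^ 2 * g) :
    ∫⁻ z, ENNReal.ofReal (exp (t * ∑ i, (z i + a i) ^ 2))
        ∂(Measure.pi fun _ ↦ gaussianReal 0 1) ≤
      ENNReal.ofReal (exp (t * (Fintype.card ι + ∑ i, a i ^ 2) +
        (Fintype.card ι + 2 * ∑ i, a i ^ 2) * g)) := by
  have hsqrt : (√(1 - 2 * t))⁻¹ ≤ exp (t + g) := by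
    rw [← sqrt_inv, show t + g = 2 * (t + g) / 2 by ring, exp_half]
    exact sqrt_le_sqrt hinv
  have hcoord (b : ℝ) : exp (t * b ^ 2 / (1 - 2 * t)) / √(1 - 2 * t) ≤
      exp (t * (1 + b ^ 2) + (1 + 2 * b ^ 2) * g) := calc
    _ ≤ exp (t * b ^ 2 + 2 * b ^ 2 * g) * exp (t + g) := by
      rw [div_eq_mul_inv]; gcongr; exact hshift b
    _ = _ := by rw [← exp_add]; ring_nf
  have hsum : ∑ i, (t * (1 + a i ^ 2) + (1 + 2 * a i ^ 2) * g) =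
      t * (Fintype.card ι + ∑ i, a i ^ 2) + (Fintype.card ι + 2 * ∑ i, a i ^ 2) * g := by
    simp only [Finset.sum_add_distrib, ← Finset.mul_sum, ← Finset.sum_mul, Finset.sum_const,
      Finset.card_univ, nsmul_eq_mul, mul_one]
  rw [lintegral_exp_mul_sum_sq_add a ht, ← hsum, exp_sum,
    ENNReal.ofReal_prod_of_nonneg fun _ _ ↦ (exp_pos _).le]
  exact Finset.prod_le_prod' fun i _ ↦ ENNReal.ofReal_le_ofReal (hcoord (a i))

theorem lintegral_exp_mul_sum_sq_add_le_of_nonneg (a : ι → ℝ) {t : ℝ} (ht0 : 0 ≤ t)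
    (ht : t < 1 / 2) :
    ∫⁻ z, ENNReal.ofReal (exp (t * ∑ i, (z i + a i) ^ 2))
        ∂(Measure.pi fun _ ↦ gaussianReal 0 1) ≤
      ENNReal.ofReal (exp (t * (Fintype.card ι + ∑ i, a i ^ 2) +
        (Fintype.card ι + 2 * ∑ i, a i ^ 2) * t ^ 2 / (1 - 2 * t))) := by
  have h : 1 - 2 * t ≠ 0 := by linarith
  rw [mul_div_assoc]
  exact lintegral_exp_mul_sum_sq_add_le a ht (inv_one_sub_two_mul_le_exp_of_nonneg ht0 ht)
    fun b ↦ le_of_eq (by rw [mul_div_assoc', add_div' _ _ _ h]; congr 1; ring)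

theorem lintegral_exp_mul_sum_sq_add_le_of_nonpos (a : ι → ℝ) {t : ℝ} (ht : t ≤ 0) :
    ∫⁻ z, ENNReal.ofReal (exp (t * ∑ i, (z i + a i) ^ 2))
        ∂(Measure.pi fun _ ↦ gaussianReal 0 1) ≤
      ENNReal.ofReal (exp (t * (Fintype.card ι + ∑ i, a i ^ 2) +
        (Fintype.card ι + 2 * ∑ i, a i ^ 2) * t ^ 2)) := by
  refine lintegral_exp_mul_sum_sq_add_le a (by linarith) (inv_one_sub_two_mul_le_exp_of_nonpos ht)
    fun b ↦ ?_
  rw [div_le_iff₀ (by linarith)]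
  nlinarith [mul_nonpos_of_nonneg_of_nonpos (sq_nonneg (b * t)) ht]

end NoncentralChiSquare

/-- Birgé's tail bounds for a noncentral chi-square random variable
`X ~ χ²_k(ν)` realized as `∑ (Zᵢ + aᵢ)²` with `Zᵢ` i.i.d. `N(0,1)` and
`ν = ∑ aᵢ²`: for all `x > 0`,
`P[X > (k+ν) + 2√((k+2ν)x) + 2x] ≤ e^{−x}` and
`P[X < (k+ν) − 2√((k+2ν)x)] ≤ e^{−x}`. -/
theorem noncentral_chi_square_tail_bounds (k : ℕ) (a : Fin k → ℝ) (x : ℝ) (hx : 0 < x) :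
    (Measure.pi fun _ : Fin k => gaussianReal 0 1)
        {z | ((k : ℝ) + ∑ i, (a i) ^ 2) +
              2 * Real.sqrt (((k : ℝ) + 2 * ∑ i, (a i) ^ 2) * x) + 2 * x <
            ∑ i, (z i + a i) ^ 2} ≤
      ENNReal.ofReal (Real.exp (-x)) ∧
    (Measure.pi fun _ : Fin k => gaussianReal 0 1)
        {z | ∑ i, (z i + a i) ^ 2 <
            ((k : ℝ) + ∑ i, (a i) ^ 2) -
              2 * Real.sqrt (((k : ℝ) + 2 * ∑ i, (a i) ^ 2) * x)} ≤
      ENNReal.ofReal (Real.exp (-x)) := by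
  rcases k.eq_zero_or_pos with rfl | hk
  · simp [show ¬ 2 * x < 0 by linarith]
  have hD : 0 < (k : ℝ) + 2 * ∑ i, a i ^ 2 := by
    have : (0 : ℝ) < k := Nat.cast_pos.2 hk
    positivity
  have hX : AEMeasurable (fun z : Fin k → ℝ ↦ ∑ i, (z i + a i) ^ 2)
      (Measure.pi fun _ ↦ gaussianReal 0 1) := (by fun_prop : Measurable _).aemeasurable
  exact ⟨measure_gt_le_exp_neg_of_lintegral_exp_le hX hD hx.le fun t ht0 ht ↦ by
      simpa only [Fintype.card_fin] using lintegral_exp_mul_sum_sq_add_le_of_nonneg a ht0 ht,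
    measure_lt_le_exp_neg_of_lintegral_exp_le hX hD hx.le fun t ht ↦ by
      simpa only [Fintype.card_fin] using lintegral_exp_mul_sum_sq_add_le_of_nonpos a ht⟩
end

section
/- Let β, β' be drawn independently from the symmetric prior π that selects a uniformly random subset S ⊂ [p] of size s and sets β_j = ±A with equal probability independently on S, and 0 otherwise. Then for any θ ∈ ℝ, E[exp(θ·n·⟨β,β'⟩)] ≤ exp((s²/p)·(cosh(θnA²) − 1)). -/
open Finset

/-- The sign `±1` attached to a Rademacher coin. -/
def radSign (b : Bool) : ℝ := if b then 1 else -1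

/-!
Summing out the signs, each coordinate of `S ∩ S'` contributes a factor `x = cosh (θ n A²) ≥ 1`
and every other coordinate a factor `1`, so the expectation is `E[x ^ |S ∩ S'|]`. Expanding
`x ^ |U| = ∑_{T ⊆ U} (x - 1) ^ |T|` and counting the `S' ⊇ T` turns the inner average over `S'`
into `∑_{T ⊆ S} C(p - |T|, s - |T|) / C(p, s) · (x - 1) ^ |T|`. That ratio of binomials is at most
`(s / p) ^ |T|`, so the average is at most `(1 + s (x - 1) / p) ^ s ≤ exp (s² (x - 1) / p)`.
-/

open Real

lemma sum_sum_exp_mul_radSign_mul (c : ℝ) :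
    ∑ b : Bool, ∑ b' : Bool, exp (c * (radSign b * radSign b')) = 4 * cosh c := by
  simp only [Fintype.sum_bool, radSign, if_true, Bool.false_eq_true, if_false, mul_one, mul_neg,
    neg_neg, cosh_eq]
  ring

lemma sum_sum_exp_mul_sum_radSign_mul {ι : Type*} [Fintype ι] [DecidableEq ι]
    (c : ℝ) (T : Finset ι) :
    ∑ σ : ι → Bool, ∑ σ' : ι → Bool, exp (c * ∑ j ∈ T, radSign (σ j) * radSign (σ' j)) =
      4 ^ Fintype.card ι * cosh c ^ #T := by
  set f : ι → Bool → Bool → ℝ := fun j b b' =>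
    if j ∈ T then exp (c * (radSign b * radSign b')) else 1
  have exp_eq_prod (σ σ' : ι → Bool) :
      exp (c * ∑ j ∈ T, radSign (σ j) * radSign (σ' j)) = ∏ j, f j (σ j) (σ' j) := by
    rw [mul_sum, exp_sum, prod_ite_mem, univ_inter]
  have sum_f (j : ι) : ∑ b, ∑ b', f j b b' = 4 * if j ∈ T then cosh c else 1 := by
    by_cases hj : j ∈ T
    · simpa only [f, hj, if_true, mul_one] using sum_sum_exp_mul_radSign_mul c
    · simp only [f, hj, if_false, sum_const, card_univ, Fintype.card_bool, nsmul_eq_mul]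
      norm_num
  calc ∑ σ : ι → Bool, ∑ σ' : ι → Bool, exp (c * ∑ j ∈ T, radSign (σ j) * radSign (σ' j))
      = ∑ σ : ι → Bool, ∏ j, ∑ b', f j (σ j) b' := by
        simp_rw [exp_eq_prod, Fintype.prod_sum]
    _ = ∏ j, ∑ b, ∑ b', f j b b' := (Fintype.prod_sum fun j b => ∑ b', f j b b').symm
    _ = 4 ^ Fintype.card ι * cosh c ^ #T := by
        rw [prod_congr rfl fun j _ => sum_f j, prod_mul_distrib, prod_const, prod_ite_mem,
          univ_inter, prod_const, card_univ]

theorem Nat.pow_mul_choose_sub_sub_le {p s k : ℕ} (hk : k ≤ s) (hs : s ≤ p) :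
    p ^ k * (p - k).choose (s - k) ≤ s ^ k * p.choose s := by
  induction k with
  | zero => simp
  | succ k ih =>
    obtain ⟨a, ha⟩ : ∃ a, p - k = a + 1 := ⟨p - (k + 1), by omega⟩
    obtain ⟨b, hb⟩ : ∃ b, s - k = b + 1 := ⟨s - (k + 1), by omega⟩
    have hpa : p - (k + 1) = a := by omega
    have hsb : s - (k + 1) = b := by omega
    -- `(s - k) p ≤ s (p - k)` is `s k ≤ p k`
    have ratio : (b + 1) * p ≤ s * (a + 1) := by
      rw [← ha, ← hb, Nat.sub_mul, Nat.mul_sub]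
      exact Nat.sub_le_sub_left (by rw [Nat.mul_comm k]; exact Nat.mul_le_mul_right k hs) _
    refine Nat.le_of_mul_le_mul_left ?_ (Nat.succ_pos a)
    calc (a + 1) * (p ^ (k + 1) * (p - (k + 1)).choose (s - (k + 1)))
        = p * (b + 1) * (p ^ k * (p - k).choose (s - k)) := by
          rw [hpa, hsb, ha, hb, pow_succ, mul_left_comm, Nat.add_one_mul_choose_eq]; ring
      _ ≤ p * (b + 1) * (s ^ k * p.choose s) := Nat.mul_le_mul_left _ (ih (by omega))
      _ ≤ s * (a + 1) * (s ^ k * p.choose s) := by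
          rw [Nat.mul_comm p]; exact Nat.mul_le_mul_right _ ratio
      _ = (a + 1) * (s ^ (k + 1) * p.choose s) := by ring

lemma choose_sub_sub_le_div_pow_mul_choose {p s k : ℕ} (hk : k ≤ s) (hs : s ≤ p) :
    ((p - k).choose (s - k) : ℝ) ≤ ((s : ℝ) / p) ^ k * p.choose s := by
  rcases Nat.eq_zero_or_pos k with rfl | hk0
  · simp
  have hp : (0 : ℝ) < (p : ℝ) ^ k := pow_pos (by exact_mod_cast hk0.trans_le (hk.trans hs)) k
  rw [div_pow, div_mul_eq_mul_div, le_div_iff₀ hp, mul_comm]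
  exact_mod_cast Nat.pow_mul_choose_sub_sub_le hk hs

variable {α R : Type*} [DecidableEq α]

lemma sum_powersetCard_add_one_pow_card_inter [CommSemiring R] {s : ℕ} {S t : Finset α}
    (hSt : S ⊆ t) (hS : #S ≤ s) (y : R) :
    ∑ S' ∈ t.powersetCard s, (y + 1) ^ #(S ∩ S') =
      ∑ T ∈ S.powerset, ((#t - #T).choose (s - #T) : R) * y ^ #T := by
  calc ∑ S' ∈ t.powersetCard s, (y + 1) ^ #(S ∩ S')
      = ∑ S' ∈ t.powersetCard s, ∑ T ∈ S.powerset, if T ⊆ S' then y ^ #T else 0 := by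
        refine sum_congr rfl fun S' _ => ?_
        rw [← sum_pow_mul_eq_add_pow, ← sum_filter]
        simp only [one_pow, mul_one]
        congr 1
        ext T
        simp only [mem_powerset, mem_filter, subset_inter_iff]
    _ = ∑ T ∈ S.powerset, #((t.powersetCard s).filter (T ⊆ ·)) * y ^ #T := by
        rw [sum_comm]
        refine sum_congr rfl fun T _ => ?_
        rw [← sum_filter, sum_const, nsmul_eq_mul]
    _ = _ := by
        refine sum_congr rfl fun T hT => ?_
        have hTS := mem_powerset.1 hT
        rw [card_filter_powersetCard_subset T t s (hTS.trans hSt) ((card_le_card hTS).trans hS)]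

lemma sum_powersetCard_pow_card_inter_le {s : ℕ} {S t : Finset α} (hSt : S ⊆ t) (hS : #S = s)
    {x : ℝ} (hx : 1 ≤ x) :
    ∑ S' ∈ t.powersetCard s, x ^ #(S ∩ S') ≤
      (#t).choose s * exp ((s : ℝ) ^ 2 / #t * (x - 1)) := by
  have hst : s ≤ #t := hS ▸ card_le_card hSt
  set y := x - 1
  have hy : 0 ≤ y := sub_nonneg.2 hx
  calc ∑ S' ∈ t.powersetCard s, x ^ #(S ∩ S')
      = ∑ T ∈ S.powerset, ((#t - #T).choose (s - #T) : ℝ) * y ^ #T := by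
        rw [← sum_powersetCard_add_one_pow_card_inter hSt hS.le, sub_add_cancel]
    _ ≤ ∑ T ∈ S.powerset, ((#t).choose s : ℝ) * ((s : ℝ) / #t * y) ^ #T := by
        refine sum_le_sum fun T hT => ?_
        rw [mul_pow, ← mul_assoc, mul_comm ((#t).choose s : ℝ)]
        gcongr
        exact choose_sub_sub_le_div_pow_mul_choose (hS ▸ card_le_card (mem_powerset.1 hT)) hst
    _ = (#t).choose s * ((s : ℝ) / #t * y + 1) ^ s := by
        rw [← mul_sum, ← hS, ← sum_pow_mul_eq_add_pow]
        simp only [one_pow, mul_one]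
    _ ≤ (#t).choose s * exp ((s : ℝ) / #t * y) ^ s := by
        gcongr
        exact add_one_le_exp _
    _ = (#t).choose s * exp ((s : ℝ) ^ 2 / #t * y) := by
        rw [← exp_nat_mul]
        ring_nf

theorem symmetric_prior_mgf_cosh_bound_general (p s n : ℕ) (A : ℝ)
    (hs : s ≤ p) (θ : ℝ) :
    (∑ S ∈ Finset.powersetCard s (Finset.univ : Finset (Fin p)),
        ∑ S' ∈ Finset.powersetCard s (Finset.univ : Finset (Fin p)),
          ∑ σ : Fin p → Bool, ∑ σ' : Fin p → Bool,
            Real.exp (θ * (n : ℝ) * A ^ 2 *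
              ∑ j ∈ S ∩ S', radSign (σ j) * radSign (σ' j))) /
        (((p.choose s : ℝ)) ^ 2 * 2 ^ p * 2 ^ p) ≤
      Real.exp (((s : ℝ) ^ 2 / (p : ℝ)) * (Real.cosh (θ * (n : ℝ) * A ^ 2) - 1)) := by
  set c := θ * (n : ℝ) * A ^ 2
  set bound := (p.choose s : ℝ) * exp ((s : ℝ) ^ 2 / p * (cosh c - 1))
  have inner_le (S : Finset (Fin p)) (hS : S ∈ powersetCard s (univ : Finset (Fin p))) :
      ∑ S' ∈ powersetCard s univ, ∑ σ : Fin p → Bool, ∑ σ' : Fin p → Bool,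
        exp (c * ∑ j ∈ S ∩ S', radSign (σ j) * radSign (σ' j)) ≤ 4 ^ p * bound := by
    obtain ⟨-, hScard⟩ := mem_powersetCard.1 hS
    simp_rw [sum_sum_exp_mul_sum_radSign_mul, Fintype.card_fin, ← mul_sum]
    gcongr
    simpa using sum_powersetCard_pow_card_inter_le (subset_univ S) hScard (one_le_cosh c)
  have choose_pos : (0 : ℝ) < p.choose s := by exact_mod_cast Nat.choose_pos hs
  rw [div_le_iff₀ (by positivity)]
  calc _ ≤ ∑ S ∈ powersetCard s (univ : Finset (Fin p)), 4 ^ p * bound := sum_le_sum inner_le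
    _ = _ := by
      rw [sum_const, card_powersetCard, card_univ, Fintype.card_fin, nsmul_eq_mul,
        show (4 : ℝ) ^ p = 2 ^ p * 2 ^ p by rw [← mul_pow]; norm_num]
      ring

/-- For `β, β'` i.i.d. from the symmetric prior choosing a uniformly random
size-`s` subset `S ⊆ [p]` and setting `β_j = ±A` with independent fair signs
on `S` (so `⟨β,β'⟩ = A² ∑_{j ∈ S ∩ S'} ε_j ε'_j`), for every `θ ∈ ℝ`,
`E[exp(θ n ⟨β,β'⟩)] ≤ exp((s²/p)(cosh(θnA²) − 1))`. -/
theorem symmetric_prior_mgf_cosh_bound (p s n : ℕ) (A : ℝ) (hA : 0 < A)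
    (hs : s ≤ p) (hp : 0 < p) (θ : ℝ) :
    (∑ S ∈ Finset.powersetCard s (Finset.univ : Finset (Fin p)),
        ∑ S' ∈ Finset.powersetCard s (Finset.univ : Finset (Fin p)),
          ∑ σ : Fin p → Bool, ∑ σ' : Fin p → Bool,
            Real.exp (θ * (n : ℝ) * A ^ 2 *
              ∑ j ∈ S ∩ S', radSign (σ j) * radSign (σ' j))) /
        (((p.choose s : ℝ)) ^ 2 * 2 ^ p * 2 ^ p) ≤
      Real.exp (((s : ℝ) ^ 2 / (p : ℝ)) * (Real.cosh (θ * (n : ℝ) * A ^ 2) - 1)) :=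
  symmetric_prior_mgf_cosh_bound_general p s n A hs θ
end

section
/- Under the null with z₁,…,z_p i.i.d. N(0,1), the Type I error of the scan test satisfies, for τ* > 0, P[max_{|S|=s} ∑_{i∈S}|z_i| > s√(2τ* log p)] ≤ C(p,s)·3^s·exp(−τ*·s·log p), where C(p,s) = binom(p,s); in particular, for τ* = (r+α)²/(4r) with r > α and s = p^{1−α}, the Type I error is at most exp(−((r−α)²/(4r))·s·log p·(1+o(1))). -/
/-!
For a fixed `S` with `|S| = s`, the Chernoff bound with `λ = √(2τ log p)` and the estimate
`E[e^{λ|Z|}] ≤ E[e^{λZ}] + E[e^{-λZ}] = 2e^{λ²/2}` give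
`P[∑_{i∈S} |z_i| > sλ] ≤ 2^s e^{-sλ²/2} = 2^s p^{-τs}`; a union bound over the `C(p,s)` subsets
finishes the first claim. For the second, `C(p,s) ≤ (ep/s)^s` and `p/s ≤ 2p^α` when
`s = ⌊p^{1-α}⌋`, so the bound is `exp(-((τ - α) log p - O(1)) s)`, and
`τ - α = (r-α)²/(4r)` for `τ = (r+α)²/(4r)`.
-/

open MeasureTheory ProbabilityTheory Finset Real Filter

lemma exp_mul_abs_le_add (l x : ℝ) : exp (l * |x|) ≤ exp (l * x) + exp (-l * x) := by
  rcases abs_cases x with ⟨hx, -⟩ | ⟨hx, -⟩ <;> rw [hx]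
  · exact le_add_of_nonneg_right (exp_nonneg _)
  · rw [mul_neg, ← neg_mul]; exact le_add_of_nonneg_left (exp_nonneg _)

lemma integrable_exp_mul_abs_gaussianReal (m : ℝ) (v : NNReal) (l : ℝ) :
    Integrable (fun x ↦ exp (l * |x|)) (gaussianReal m v) :=
  ((integrable_exp_mul_gaussianReal l).add (integrable_exp_mul_gaussianReal (-l))).mono'
    (by fun_prop) (.of_forall fun x ↦ by
      rw [Real.norm_of_nonneg (exp_nonneg _)]; exact exp_mul_abs_le_add l x)

lemma mgf_abs_gaussianReal_le (v : NNReal) (l : ℝ) :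
    mgf (fun x ↦ |x|) (gaussianReal 0 v) l ≤ 2 * exp (v * l ^ 2 / 2) := by
  calc mgf (fun x ↦ |x|) (gaussianReal 0 v) l
      ≤ mgf (fun x ↦ x) (gaussianReal 0 v) l + mgf (fun x ↦ x) (gaussianReal 0 v) (-l) := by
        rw [mgf, mgf, mgf, ← integral_add (integrable_exp_mul_gaussianReal l)
          (integrable_exp_mul_gaussianReal (-l))]
        exact integral_mono (integrable_exp_mul_abs_gaussianReal 0 v l)
          ((integrable_exp_mul_gaussianReal l).add (integrable_exp_mul_gaussianReal (-l)))
          (exp_mul_abs_le_add l)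
    _ = 2 * exp (v * l ^ 2 / 2) := by simp [mgf_fun_id_gaussianReal]; ring

lemma measureReal_sum_abs_ge_le {ι : Type*} [Fintype ι] (v : NNReal) (S : Finset ι) {l : ℝ}
    (hl : 0 ≤ l) (t : ℝ) :
    (Measure.pi fun _ : ι ↦ gaussianReal 0 v).real {z | t ≤ ∑ i ∈ S, |z i|} ≤
      exp (-l * t) * (2 * exp (v * l ^ 2 / 2)) ^ S.card := by
  set μ := Measure.pi fun _ : ι ↦ gaussianReal 0 v
  have h_indep : iIndepFun (fun i (z : ι → ℝ) ↦ |z i|) μ :=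
    iIndepFun_pi (X := fun _ x ↦ |x|) fun _ ↦ measurable_abs.aemeasurable
  have h_meas : ∀ i, Measurable fun z : ι → ℝ ↦ |z i| := by fun_prop
  have h_coord : ∀ i, mgf (fun z : ι → ℝ ↦ |z i|) μ l = mgf (fun x ↦ |x|) (gaussianReal 0 v) l :=
    fun i ↦ by
      rw [← (measurePreserving_eval (fun _ : ι ↦ gaussianReal 0 v) i).map_eq]
      exact (mgf_map (X := fun x ↦ |x|) (t := l) (measurable_pi_apply i).aemeasurable
        (by fun_prop)).symm
  have h_int : Integrable (fun z ↦ exp (l * (∑ i ∈ S, fun z : ι → ℝ ↦ |z i|) z)) μ :=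
    h_indep.integrable_exp_mul_sum h_meas fun i _ ↦
      (measurePreserving_eval _ i).integrable_comp_of_integrable (g := fun x ↦ exp (l * |x|))
        (integrable_exp_mul_abs_gaussianReal 0 v l)
  calc μ.real {z | t ≤ ∑ i ∈ S, |z i|}
      = μ.real {z | t ≤ (∑ i ∈ S, fun z : ι → ℝ ↦ |z i|) z} := by simp only [Finset.sum_apply]
    _ ≤ exp (-l * t) * mgf (∑ i ∈ S, fun z : ι → ℝ ↦ |z i|) μ l :=
        measure_ge_le_exp_mul_mgf t hl h_int
    _ ≤ exp (-l * t) * (2 * exp (v * l ^ 2 / 2)) ^ S.card := by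
        rw [h_indep.mgf_sum h_meas, ← Finset.prod_const]
        gcongr with i
        · exact fun i _ ↦ mgf_nonneg
        · rw [h_coord]; exact mgf_abs_gaussianReal_le v l

lemma Nat.cast_choose_le_exp_one_mul_div_pow (n k : ℕ) :
    (n.choose k : ℝ) ≤ (exp 1 * n / k) ^ k := by
  rcases k.eq_zero_or_pos with rfl | hk
  · simp
  have hk' : (0 : ℝ) < k := by exact_mod_cast hk
  calc (n.choose k : ℝ) ≤ n ^ k / k.factorial := Nat.choose_le_pow_div k n
    _ = (k : ℝ) ^ k / k.factorial * (n / k) ^ k := by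
        rw [div_pow]; field_simp
    _ ≤ exp k * (n / k) ^ k := by gcongr; exact pow_div_factorial_le_exp _ hk'.le k
    _ = (exp 1 * n / k) ^ k := by
        rw [← exp_one_pow, ← mul_pow, mul_div_assoc]

lemma Nat.le_two_mul_floor {x : ℝ} (hx : 1 ≤ x) : x ≤ 2 * ⌊x⌋₊ := by
  have h1 : (1 : ℝ) ≤ ⌊x⌋₊ := by exact_mod_cast Nat.le_floor (by exact_mod_cast hx)
  linarith [Nat.lt_floor_add_one x]

lemma choose_mul_two_pow_mul_exp_le {p s : ℕ} {α τ : ℝ} (hp : 0 < p) (hs : 0 < s)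
    (hsp : (p : ℝ) ^ (1 - α) ≤ 2 * s) :
    (p.choose s : ℝ) * 2 ^ s * exp (-(τ * s * log p)) ≤
      exp (-(((τ - α) * log p - (1 + log 4)) * s)) := by
  have hp' : (0 : ℝ) < p := by exact_mod_cast hp
  have hs' : (0 : ℝ) < s := by exact_mod_cast hs
  have hratio : exp 1 * p / s * 2 ≤ exp (1 + log 4 + α * log p) := by
    rw [exp_add, exp_add, exp_log (by norm_num), mul_comm α, ← rpow_def_of_pos hp']
    have : (p : ℝ) ≤ 2 * s * p ^ α := by
      calc (p : ℝ) = p ^ (1 - α) * p ^ α := by rw [← rpow_add hp']; simp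
        _ ≤ 2 * s * p ^ α := by gcongr
    rw [div_mul_eq_mul_div, div_le_iff₀ hs']
    nlinarith [exp_pos 1]
  calc (p.choose s : ℝ) * 2 ^ s * exp (-(τ * s * log p))
      ≤ (exp 1 * p / s) ^ s * 2 ^ s * exp (-(τ * s * log p)) := by
        gcongr; exact Nat.cast_choose_le_exp_one_mul_div_pow p s
    _ ≤ exp (1 + log 4 + α * log p) ^ s * exp (-(τ * s * log p)) := by
        rw [← mul_pow]; gcongr
    _ = exp (-(((τ - α) * log p - (1 + log 4)) * s)) := by
        rw [← exp_nat_mul, ← exp_add]; ring_nf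

lemma measure_exists_sum_abs_gt_le (p s : ℕ) (hp : 1 ≤ p) {τ : ℝ} (hτ : 0 ≤ τ) :
    (Measure.pi fun _ : Fin p ↦ gaussianReal 0 1)
        {z | ∃ S ∈ powersetCard s (univ : Finset (Fin p)),
              (s : ℝ) * √(2 * τ * log p) < ∑ i ∈ S, |z i|} ≤
      ENNReal.ofReal ((p.choose s : ℝ) * 2 ^ s * exp (-(τ * s * log p))) := by
  set μ := Measure.pi fun _ : Fin p ↦ gaussianReal 0 1
  set l := √(2 * τ * log p)
  have hl : 0 ≤ l := sqrt_nonneg _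
  have hL : 0 ≤ log p := log_nonneg (by exact_mod_cast hp)
  have hl2 : l ^ 2 = 2 * τ * log p := sq_sqrt (by positivity)
  have h_subset : ∀ S ∈ powersetCard s (univ : Finset (Fin p)),
      μ {z | s * l < ∑ i ∈ S, |z i|} ≤ ENNReal.ofReal (2 ^ s * exp (-(τ * s * log p))) := by
    intro S hS
    calc μ {z | s * l < ∑ i ∈ S, |z i|} ≤ μ {z | s * l ≤ ∑ i ∈ S, |z i|} :=
          measure_mono (Set.ofPred_subset_ofPred.2 fun _ ↦ le_of_lt)
      _ = ENNReal.ofReal (μ.real {z | s * l ≤ ∑ i ∈ S, |z i|}) :=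
          (ofReal_measureReal (measure_ne_top _ _)).symm
      _ ≤ ENNReal.ofReal (exp (-l * (s * l)) * (2 * exp ((1 : NNReal) * l ^ 2 / 2)) ^ S.card) :=
          ENNReal.ofReal_le_ofReal (measureReal_sum_abs_ge_le 1 S hl _)
      _ = ENNReal.ofReal (2 ^ s * exp (-(τ * s * log p))) := by
          rw [(mem_powersetCard.1 hS).2, mul_pow, ← exp_nat_mul, NNReal.coe_one, hl2,
            mul_left_comm, ← exp_add]
          congr 3
          linear_combination (-(s : ℝ)) * hl2
  calc μ {z | ∃ S ∈ powersetCard s (univ : Finset (Fin p)), s * l < ∑ i ∈ S, |z i|}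
      = μ (⋃ S ∈ powersetCard s (univ : Finset (Fin p)), {z | s * l < ∑ i ∈ S, |z i|}) := by
        congr 1; ext z; simp
    _ ≤ ∑ S ∈ powersetCard s (univ : Finset (Fin p)), μ {z | s * l < ∑ i ∈ S, |z i|} :=
        measure_biUnion_finset_le _ _
    _ ≤ ∑ S ∈ powersetCard s (univ : Finset (Fin p)),
          ENNReal.ofReal (2 ^ s * exp (-(τ * s * log p))) := sum_le_sum h_subset
    _ = ENNReal.ofReal ((p.choose s : ℝ) * 2 ^ s * exp (-(τ * s * log p))) := by
        rw [sum_const, card_powersetCard, card_univ, Fintype.card_fin, nsmul_eq_mul,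
          ← ENNReal.ofReal_natCast, ← ENNReal.ofReal_mul (by positivity)]
        congr 1; ring

/-- Type I error of the scan test. Under the null (`z₁,…,z_p` i.i.d. `N(0,1)`),
for any `τ* > 0`,
`P[max_{|S|=s} ∑_{i∈S}|z_i| > s√(2τ* log p)] ≤ C(p,s)·3^s·exp(−τ* s log p)`;
in particular, for `τ* = (r+α)²/(4r)` with `r > α`, `α ∈ (1/2,1)` and
`s = ⌊p^{1−α}⌋`, the Type I error is at most
`exp(−((r−α)²/(4r))·s·log p·(1+o(1)))`. -/
theorem scan_test_type_one_error :
    (∀ p s : ℕ, 1 ≤ p → ∀ τ : ℝ, 0 < τ →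
      (Measure.pi fun _ : Fin p => gaussianReal 0 1)
          {z | ∃ S ∈ Finset.powersetCard s (Finset.univ : Finset (Fin p)),
                (s : ℝ) * Real.sqrt (2 * τ * Real.log p) < ∑ i ∈ S, |z i|} ≤
        ENNReal.ofReal
          ((p.choose s : ℝ) * 3 ^ s * Real.exp (-(τ * s * Real.log p)))) ∧
    (∀ α r : ℝ, 1 / 2 < α → α < 1 → α < r → ∀ ε : ℝ, 0 < ε →
      ∃ p₀ : ℕ, ∀ p : ℕ, p₀ ≤ p →
        (Measure.pi fun _ : Fin p => gaussianReal 0 1)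
            {z | ∃ S ∈ Finset.powersetCard ⌊(p : ℝ) ^ (1 - α)⌋₊
                    (Finset.univ : Finset (Fin p)),
                  (⌊(p : ℝ) ^ (1 - α)⌋₊ : ℝ) *
                      Real.sqrt (2 * ((r + α) ^ 2 / (4 * r)) * Real.log p) <
                    ∑ i ∈ S, |z i|} ≤
          ENNReal.ofReal
            (Real.exp (-((r - α) ^ 2 / (4 * r) *
              (⌊(p : ℝ) ^ (1 - α)⌋₊ : ℝ) * Real.log p * (1 - ε))))) := by
  refine ⟨fun p s hp τ hτ ↦ (measure_exists_sum_abs_gt_le p s hp hτ.le).trans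
    (ENNReal.ofReal_le_ofReal (by gcongr; norm_num)), fun α r hα2 hα1 hαr ε hε ↦ ?_⟩
  have hr : 0 < r := by linarith
  set β := (r - α) ^ 2 / (4 * r) with hβ_def
  have hβ : 0 < β := div_pos (pow_pos (sub_pos.2 hαr) 2) (by positivity)
  have hτ : (r + α) ^ 2 / (4 * r) = α + β := by rw [hβ_def]; field_simp; ring
  obtain ⟨p₀, hp₀⟩ := eventually_atTop.1 <| (eventually_ge_atTop 1).and <|
    (tendsto_log_atTop.comp tendsto_natCast_atTop_atTop).eventually_ge_atTop
      ((1 + log 4) / (β * ε))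
  refine ⟨p₀, fun p hp ↦ ?_⟩
  obtain ⟨hp1, hL⟩ := hp₀ p hp
  have hx : 1 ≤ (p : ℝ) ^ (1 - α) := one_le_rpow (by exact_mod_cast hp1) (by linarith)
  set s := ⌊(p : ℝ) ^ (1 - α)⌋₊
  have hs : 0 < s := Nat.floor_pos.2 hx
  refine (measure_exists_sum_abs_gt_le p s hp1 (by positivity)).trans
    (ENNReal.ofReal_le_ofReal ((choose_mul_two_pow_mul_exp_le hp1 hs
      (Nat.le_two_mul_floor hx)).trans (exp_le_exp.2 ?_)))
  have hlog : (1 + log 4) * s ≤ β * ε * log p * s :=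
    mul_le_mul_of_nonneg_right ((div_le_iff₀' (by positivity)).1 hL) (Nat.cast_nonneg s)
  rw [hτ]
  linarith
end
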